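/- arXiv:1807.03814 — 3 statements merged into one kernel-verified Lean document; each statement's English description precedes it below -/
import Mathlib

section
/- Let T be a finite weighted tree (a connected acyclic graph with positive edge weights, with the induced shortest-path metric). Then the Lipschitz free space F(T) over T is linearly isometric to ℓ₁^k, where k is the number of edges of T. -/
/-!
Root the tree at a vertex `O` and orient every edge away from `O`. For a molecule `m`, the
flow through an edge `e` is the mass of `m` beyond `e`, i.e. on the vertices whose root path
uses `e`. Telescoping `g` along root paths and summing by parts gives
`∑ᵥ m v * g v = ∑ₑ flow e * (increment of g across e)` whenever `∑ m = 0`. For the path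
metric a function is `1`-Lipschitz iff each of its increments is at most `w e` in absolute
value, so the free norm of `m` is `∑ₑ |flow e| * w e`, attained by the potential rising by
`± w e` across `e` according to the sign of the flow. Thus `m ↦ (flow e * w e)ₑ` is isometric
into `ℓ₁` of the edges; it is injective by the same identity, and onto since a tree has one
vertex more than edges.
-/

open Finset

/-- The Lipschitz-free (Kantorovich–Rubinstein) norm of a molecule on a finite
metric space, expressed via duality with `1`-Lipschitz functions. -/
noncomputable def freeNorm (M : Type*) [MetricSpace M] [Fintype M] (m : M → ℝ) : ℝ :=
  sSup {r : ℝ | ∃ f : M → ℝ, LipschitzWith 1 f ∧ r = ∑ p, m p * f p}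

/-- Molecules: the underlying vector space of the Lipschitz free space on a finite space;
equipped with `freeNorm` it is the Lipschitz free space `F(M)`. -/
def molecules (M : Type*) [Fintype M] : Submodule ℝ (M → ℝ) where
  carrier := {m | ∑ p, m p = 0}
  add_mem' := by
    intro a b ha hb
    simp only [Set.mem_setOf_eq, Pi.add_apply, Finset.sum_add_distrib] at *
    rw [ha, hb]; ring
  zero_mem' := by simp
  smul_mem' := by
    intro c a ha
    simp only [Set.mem_setOf_eq, Pi.smul_apply, smul_eq_mul, ← Finset.mul_sum] at *
    rw [ha]; ring

/-- The norm of `ℓ₁^k`. -/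
def l1norm {k : ℕ} (x : Fin k → ℝ) : ℝ := ∑ i, |x i|

/-- The shortest-path distance of a positively weighted finite tree: the sum of the
weights of the edges along the unique path. -/
noncomputable def treeDist {V : Type*} (G : SimpleGraph V) (hT : G.IsTree)
    (w : Sym2 V → ℝ) (x y : V) : ℝ :=
  ((((hT.existsUnique_path x y).exists.choose).edges).map w).sum

lemma Finset.sum_filter_mem_append_singleton {ι α β : Type*} [Fintype ι] [DecidableEq α]
    [AddCommMonoid β] {c : ι → α} (hc : Function.Injective c) {L : List α} {x : ι}
    (hx : c x ∉ L) (f : ι → β) :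
    ∑ i with c i ∈ L ++ [c x], f i = ∑ i with c i ∈ L, f i + f x := by
  have hxL : x ∉ ({i | c i ∈ L} : Finset ι) := by simpa using hx
  have : ({i | c i ∈ L ++ [c x]} : Finset ι) = cons x {i | c i ∈ L} hxL := by
    ext i
    simp [hc.eq_iff, or_comm]
  rw [this, sum_cons, add_comm]

lemma finrank_molecules_add_one (M : Type*) [Fintype M] [Nonempty M] :
    Module.finrank ℝ (molecules M) + 1 = Fintype.card M := by
  classical
  let s : (M → ℝ) →ₗ[ℝ] ℝ := ∑ p, LinearMap.proj p
  have hker : molecules M = LinearMap.ker s := by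
    ext m
    simp [s, molecules]
  have hs : LinearMap.range s = ⊤ := by
    refine LinearMap.range_eq_top.2 fun r => ⟨Pi.single (Classical.arbitrary M) r, ?_⟩
    simp [s]
  have := LinearMap.finrank_range_add_finrank_ker s
  rw [hs, finrank_top, Module.finrank_self, Module.finrank_fintype_fun_eq_card, ← hker] at this
  omega

namespace SimpleGraph.Walk

variable {V : Type*} {G : SimpleGraph V}

lemma abs_sub_le_sum_edges {f : V → ℝ} {w : Sym2 V → ℝ}
    (hf : ∀ u v, G.Adj u v → |f v - f u| ≤ w s(u, v)) {x y : V} (p : G.Walk x y) :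
    |f y - f x| ≤ (p.edges.map w).sum := by
  induction p with
  | nil => simp
  | @cons x u y h q ih =>
    rw [edges_cons, List.map_cons, List.sum_cons]
    calc |f y - f x| ≤ |f u - f x| + |f y - f u| := by
          rw [add_comm]; exact abs_sub_le _ _ _
      _ ≤ _ := add_le_add (hf x u h) ih

end SimpleGraph.Walk

namespace SimpleGraph.IsTree

variable {V : Type*} {G : SimpleGraph V} (hT : G.IsTree)

noncomputable def path (x y : V) : G.Walk x y :=
  (hT.existsUnique_path x y).exists.choose

lemma isPath_path (x y : V) : (hT.path x y).IsPath :=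
  (hT.existsUnique_path x y).exists.choose_spec

lemma eq_path {x y : V} {p : G.Walk x y} (hp : p.IsPath) : p = hT.path x y :=
  (hT.existsUnique_path x y).unique hp (hT.isPath_path x y)

lemma path_self (x : V) : hT.path x x = .nil :=
  (hT.eq_path .nil).symm

lemma path_of_adj {x y : V} (h : G.Adj x y) : hT.path x y = .cons h .nil :=
  (hT.eq_path (by simp [h.ne])).symm

variable (O : V)

lemma path_eq_concat_of_mem_support [DecidableEq V] {a b : V} (h : G.Adj a b)
    (hb : b ∈ (hT.path O a).support) : hT.path O a = (hT.path O b).concat h.symm := by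
  have htake : (hT.path O a).takeUntil b hb = hT.path O b :=
    hT.eq_path ((hT.isPath_path O a).takeUntil hb)
  have hdrop : (hT.path O a).dropUntil b hb = .cons h.symm .nil := by
    rw [hT.eq_path ((hT.isPath_path O a).dropUntil hb), hT.path_of_adj h.symm]
  conv_lhs => rw [← (hT.path O a).take_spec hb, htake, hdrop]
  exact (Walk.concat_eq_append _ _).symm

lemma path_eq_concat_of_notMem_support {a b : V} (h : G.Adj a b)
    (hb : b ∉ (hT.path O a).support) : hT.path O b = (hT.path O a).concat h :=
  (hT.eq_path ((hT.isPath_path O a).concat hb h)).symm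

def IsOutward (d : G.Dart) : Prop :=
  hT.path O d.snd = (hT.path O d.fst).concat d.adj

lemma exists_isOutward [DecidableEq V] {e : Sym2 V} (he : e ∈ G.edgeSet) :
    ∃ d : G.Dart, d.edge = e ∧ hT.IsOutward O d := by
  induction e using Sym2.ind with
  | _ a b =>
    by_cases hb : b ∈ (hT.path O a).support
    · exact ⟨⟨(b, a), he.symm⟩, Sym2.eq_swap, hT.path_eq_concat_of_mem_support O he hb⟩
    · exact ⟨⟨(a, b), he⟩, rfl, hT.path_eq_concat_of_notMem_support O he hb⟩

variable {hT O}

lemma IsOutward.length_path_snd {d : G.Dart} (hd : hT.IsOutward O d) :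
    (hT.path O d.snd).length = (hT.path O d.fst).length + 1 := by
  rw [hd, Walk.length_concat]

lemma IsOutward.eq_of_edge_eq {d d' : G.Dart} (hd : hT.IsOutward O d)
    (hd' : hT.IsOutward O d') (h : d.edge = d'.edge) : d = d' := by
  refine ((dart_edge_eq_iff d d').1 h).resolve_right fun hsymm => ?_
  have h₁ := hd.length_path_snd
  have h₂ := hd'.length_path_snd
  rw [hsymm] at h₁
  change (hT.path O d'.fst).length = (hT.path O d'.snd).length + 1 at h₁
  omega

lemma IsOutward.edges_path_snd {d : G.Dart} (hd : hT.IsOutward O d) :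
    (hT.path O d.snd).edges = (hT.path O d.fst).edges ++ [d.edge] := by
  rw [hd, Walk.edges_concat, List.concat_eq_append]
  rfl

lemma IsOutward.edge_notMem_edges_path_fst {d : G.Dart} (hd : hT.IsOutward O d) :
    d.edge ∉ (hT.path O d.fst).edges := by
  have hnodup := (hT.isPath_path O d.snd).isTrail.edges_nodup
  rw [hd.edges_path_snd] at hnodup
  exact fun hmem => List.disjoint_of_nodup_append hnodup hmem (List.mem_singleton_self _)

variable (hT O)

lemma exists_isOutward_snd_eq {v : V} (hv : v ≠ O) :
    ∃ u, ∃ h : G.Adj u v, hT.IsOutward O ⟨(u, v), h⟩ := by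
  have hnil : ¬ (hT.path O v).Nil := fun h => hv h.eq.symm
  refine ⟨_, (hT.path O v).adj_penultimate hnil, ?_⟩
  change hT.path O v = (hT.path O _).concat _
  conv_lhs => rw [← Walk.concat_dropLast ((hT.path O v).adj_penultimate hnil)]
  rw [hT.eq_path (hT.isPath_path O v).dropLast]

variable [DecidableEq V]

noncomputable def outwardDart (e : G.edgeSet) : G.Dart :=
  (hT.exists_isOutward O e.2).choose

lemma outwardDart_edge (e : G.edgeSet) : (hT.outwardDart O e).edge = e :=
  (hT.exists_isOutward O e.2).choose_spec.1

lemma isOutward_outwardDart (e : G.edgeSet) : hT.IsOutward O (hT.outwardDart O e) :=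
  (hT.exists_isOutward O e.2).choose_spec.2

lemma outwardDart_eq {d : G.Dart} (hd : hT.IsOutward O d) :
    hT.outwardDart O ⟨d.edge, d.edge_mem⟩ = d :=
  (hT.isOutward_outwardDart O _).eq_of_edge_eq hd (hT.outwardDart_edge O _)

noncomputable def increment (g : V → ℝ) (e : G.edgeSet) : ℝ :=
  g (hT.outwardDart O e).snd - g (hT.outwardDart O e).fst

variable [Fintype V] [DecidableRel G.Adj]

lemma sub_eq_sum_increment (g : V → ℝ) (v : V) :
    g v - g O = ∑ e : G.edgeSet with ↑e ∈ (hT.path O v).edges, hT.increment O g e := by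
  induction hn : (hT.path O v).length generalizing v with
  | zero =>
    obtain rfl := Walk.eq_of_length_eq_zero hn
    simp [hT.path_self]
  | succ n ih =>
    have hv : v ≠ O := by
      rintro rfl
      simp [hT.path_self] at hn
    obtain ⟨u, h, hd⟩ := hT.exists_isOutward_snd_eq O hv
    have hedges : (hT.path O v).edges = (hT.path O u).edges ++ [s(u, v)] := hd.edges_path_snd
    have hlen : (hT.path O v).length = (hT.path O u).length + 1 := hd.length_path_snd
    have hout : hT.outwardDart O ⟨s(u, v), h⟩ = ⟨(u, v), h⟩ := hT.outwardDart_eq O hd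
    rw [hedges, sum_filter_mem_append_singleton Subtype.val_injective (x := ⟨s(u, v), h⟩)
      hd.edge_notMem_edges_path_fst,
      ← ih u (by omega), increment, hout]
    ring

noncomputable def flow (m : V → ℝ) (e : G.edgeSet) : ℝ :=
  ∑ v with ↑e ∈ (hT.path O v).edges, m v

lemma sum_mul_eq_sum_flow_mul_increment {m : V → ℝ} (hm : ∑ v, m v = 0) (g : V → ℝ) :
    ∑ v, m v * g v = ∑ e : G.edgeSet, hT.flow O m e * hT.increment O g e := by
  calc ∑ v, m v * g v = ∑ v, m v * (g v - g O) := by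
        simp [mul_sub, sum_sub_distrib, ← sum_mul, hm]
    _ = ∑ v, ∑ e : G.edgeSet with ↑e ∈ (hT.path O v).edges, m v * hT.increment O g e := by
        simp_rw [hT.sub_eq_sum_increment O g, mul_sum]
    _ = ∑ e : G.edgeSet, ∑ v with ↑e ∈ (hT.path O v).edges, m v * hT.increment O g e :=
        sum_comm' (by simp)
    _ = _ := by simp [flow, sum_mul]

noncomputable def potential (h : G.edgeSet → ℝ) (v : V) : ℝ :=
  ∑ e : G.edgeSet with ↑e ∈ (hT.path O v).edges, h e

lemma increment_potential (h : G.edgeSet → ℝ) (e : G.edgeSet) :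
    hT.increment O (hT.potential O h) e = h e := by
  have hd := hT.isOutward_outwardDart O e
  have hnotMem := hd.edge_notMem_edges_path_fst
  rw [increment, potential, potential, hd.edges_path_snd, hT.outwardDart_edge O e] at *
  rw [sum_filter_mem_append_singleton Subtype.val_injective hnotMem]
  ring

noncomputable def weightedFlow (w : Sym2 V → ℝ) : (V → ℝ) →ₗ[ℝ] (G.edgeSet → ℝ) where
  toFun m e := hT.flow O m e * w e
  map_add' m m' := by
    ext e
    simp [flow, sum_add_distrib, add_mul]
  map_smul' c m := by
    ext e
    simp only [flow, Pi.smul_apply, smul_eq_mul, ← mul_sum, RingHom.id_apply]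
    ring

lemma injective_weightedFlow_domRestrict {w : Sym2 V → ℝ} (hw : ∀ e ∈ G.edgeSet, w e ≠ 0) :
    Function.Injective ((hT.weightedFlow O w).domRestrict (molecules V)) := by
  rw [← LinearMap.ker_eq_bot, LinearMap.ker_eq_bot']
  intro m hm
  have hflow (e : G.edgeSet) : hT.flow O m e = 0 :=
    (mul_eq_zero.1 (congrFun hm e)).resolve_right (hw e e.2)
  ext v
  simpa [hflow, Pi.single_apply] using hT.sum_mul_eq_sum_flow_mul_increment O m.2 (Pi.single v 1)

end SimpleGraph.IsTree

section TreeMetric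

variable {V : Type*} {G : SimpleGraph V} (hT : G.IsTree) [MetricSpace V] {w : Sym2 V → ℝ}

lemma dist_eq_weight_of_adj (hdist : ∀ x y : V, dist x y = treeDist G hT w x y) {a b : V}
    (h : G.Adj a b) : dist a b = w s(a, b) := by
  rw [hdist]
  change ((hT.path a b).edges.map w).sum = _
  simp [hT.path_of_adj h]

lemma weight_pos_of_mem_edgeSet (hdist : ∀ x y : V, dist x y = treeDist G hT w x y)
    {e : Sym2 V} (he : e ∈ G.edgeSet) : 0 < w e := by
  induction e using Sym2.ind with
  | _ a b => exact dist_eq_weight_of_adj hT hdist he ▸ dist_pos.2 he.ne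

lemma lipschitzWith_one_iff_forall_adj (hdist : ∀ x y : V, dist x y = treeDist G hT w x y)
    {f : V → ℝ} : LipschitzWith 1 f ↔ ∀ u v, G.Adj u v → |f v - f u| ≤ w s(u, v) := by
  refine ⟨fun hf u v h => ?_, fun hf => LipschitzWith.of_dist_le_mul fun x y => ?_⟩
  · rw [← dist_eq_weight_of_adj hT hdist h, ← Real.dist_eq, dist_comm u v]
    simpa using hf.dist_le_mul v u
  · rw [NNReal.coe_one, one_mul, Real.dist_eq, abs_sub_comm, hdist]
    exact (hT.path x y).abs_sub_le_sum_edges hf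

variable [DecidableEq V] (O : V)

lemma abs_increment_le_weight (hdist : ∀ x y : V, dist x y = treeDist G hT w x y) {f : V → ℝ}
    (hf : LipschitzWith 1 f) (e : G.edgeSet) : |hT.increment O f e| ≤ w e := by
  calc |hT.increment O f e| ≤ w (hT.outwardDart O e).edge :=
        (lipschitzWith_one_iff_forall_adj hT hdist).1 hf _ _ (hT.outwardDart O e).adj
    _ = w e := by rw [hT.outwardDart_edge O e]

variable [Fintype V] [DecidableRel G.Adj]

lemma lipschitzWith_one_potential (hdist : ∀ x y : V, dist x y = treeDist G hT w x y)
    {h : G.edgeSet → ℝ} (hh : ∀ e, |h e| ≤ w e) : LipschitzWith 1 (hT.potential O h) := by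
  refine (lipschitzWith_one_iff_forall_adj hT hdist).2 fun u v huv => ?_
  let e : G.edgeSet := ⟨s(u, v), huv⟩
  have hincr := hT.increment_potential O h e
  rcases SimpleGraph.dart_edge_eq_mk'_iff'.1 (hT.outwardDart_edge O e) with ⟨hu, hv⟩ | ⟨hv, hu⟩
  · rw [SimpleGraph.IsTree.increment, hu, hv] at hincr
    exact hincr ▸ hh e
  · rw [SimpleGraph.IsTree.increment, hu, hv, ← neg_sub] at hincr
    rw [← abs_neg, hincr]
    exact hh e

theorem freeNorm_eq_sum_abs_flow_mul_weight
    (hdist : ∀ x y : V, dist x y = treeDist G hT w x y) {m : V → ℝ} (hm : ∑ v, m v = 0) :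
    freeNorm V m = ∑ e : G.edgeSet, |hT.flow O m e| * w e := by
  set h : G.edgeSet → ℝ := fun e => if 0 ≤ hT.flow O m e then w e else -w e
  have hh : ∀ e, |h e| ≤ w e := fun e => by
    have := (weight_pos_of_mem_edgeSet hT hdist e.2).le
    simp only [h]
    split_ifs <;> simp [abs_of_nonneg this]
  refine IsGreatest.csSup_eq ⟨⟨_, lipschitzWith_one_potential hT O hdist hh, ?_⟩, ?_⟩
  · rw [hT.sum_mul_eq_sum_flow_mul_increment O hm]
    refine sum_congr rfl fun e _ => ?_
    rw [hT.increment_potential]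
    by_cases hflow : 0 ≤ hT.flow O m e
    · simp [h, hflow, abs_of_nonneg hflow]
    · simp [h, hflow, abs_of_neg (not_le.1 hflow)]
  · rintro _ ⟨f, hf, rfl⟩
    rw [hT.sum_mul_eq_sum_flow_mul_increment O hm]
    refine sum_le_sum fun e _ => ?_
    calc hT.flow O m e * hT.increment O f e ≤ |hT.flow O m e| * |hT.increment O f e| :=
          (le_abs_self _).trans (abs_mul _ _).le
      _ ≤ |hT.flow O m e| * w e := by gcongr; exact abs_increment_le_weight hT O hdist hf e

end TreeMetric

theorem stmt0_general {V : Type*} [Fintype V] [DecidableEq V] [MetricSpace V]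
    (G : SimpleGraph V) [DecidableRel G.Adj] (hT : G.IsTree)
    (w : Sym2 V → ℝ)
    (hdist : ∀ x y : V, dist x y = treeDist G hT w x y) :
    ∃ T : molecules V ≃ₗ[ℝ] (Fin G.edgeFinset.card → ℝ),
      ∀ m : molecules V, freeNorm V m = l1norm (T m) := by
  obtain ⟨O⟩ := hT.connected.nonempty
  have hw (e : Sym2 V) (he : e ∈ G.edgeSet) : 0 < w e := weight_pos_of_mem_edgeSet hT hdist he
  have hdim : Module.finrank ℝ (molecules V) = Module.finrank ℝ (G.edgeSet → ℝ) := by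
    have : Nonempty V := ⟨O⟩
    have := finrank_molecules_add_one V
    have := hT.card_edgeFinset
    rw [Module.finrank_fintype_fun_eq_card, ← SimpleGraph.edgeFinset_card]
    omega
  let ε : Fin G.edgeFinset.card ≃ G.edgeSet :=
    (Fintype.equivFinOfCardEq SimpleGraph.edgeFinset_card.symm).symm
  let F := LinearMap.linearEquivOfInjective _
    (hT.injective_weightedFlow_domRestrict O fun e he => (hw e he).ne') hdim
  refine ⟨F ≪≫ₗ LinearEquiv.funCongrLeft ℝ ℝ ε, fun m => ?_⟩
  rw [freeNorm_eq_sum_abs_flow_mul_weight hT O hdist m.2, l1norm, ← ε.sum_comp]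
  refine sum_congr rfl fun i _ => ?_
  simp [F, SimpleGraph.IsTree.weightedFlow, abs_mul, abs_of_pos (hw _ (ε i).2)]

/-- the Lipschitz free space over a finite weighted tree (with positive
edge weights and the induced shortest-path metric) is linearly isometric to `ℓ₁^k`,
where `k` is the number of edges of the tree. -/
theorem stmt0 {V : Type*} [Fintype V] [DecidableEq V] [MetricSpace V]
    (G : SimpleGraph V) [DecidableRel G.Adj] (hT : G.IsTree)
    (w : Sym2 V → ℝ) (hw : ∀ e ∈ G.edgeSet, 0 < w e)
    (hdist : ∀ x y : V, dist x y = treeDist G hT w x y) :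
    ∃ T : molecules V ≃ₗ[ℝ] (Fin G.edgeFinset.card → ℝ),
      ∀ m : molecules V, freeNorm V m = l1norm (T m) :=
  stmt0_general G hT w hdist
end

section
/- Let M be a finite metric space and T a finite weighted tree containing M as a subset of its vertices, with the metric on M induced from T. If every finite subset of a weighted tree admits a tree metric on that subset which is 8-equivalent to the induced metric (Gupta's theorem), then the Banach–Mazur distance between F(M) and ℓ₁^{|M|−1} is at most 8. -/
/-!
Root the tree at `r`; every edge is then `{v, parent v}` for a unique `v ≠ r`. Summation by
parts along the tree turns the pairing of a molecule `m` with a function `f` into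
`∑_{v ≠ r} (f v - f (parent v)) * μ v`, where `μ v` is the mass of `m` on the subtree below `v`.
For the tree metric this pairing is therefore at most `∑_{v ≠ r} w(v, parent v) * |μ v|`, with
equality for the function climbing by `± w(v, parent v)` along each edge. So the coordinates
`w(v, parent v) * μ v`, which determine `m`, identify `F(M, d_T)` isometrically with
`ℓ₁^{|M|-1}`. Gupta's theorem provides a tree metric on `M` that is `8`-equivalent to the given
one, and passing to an `8`-equivalent metric changes the free norm by a factor of at most `8`.
-/

open Finset

open SimpleGraph

section RootedTree

variable {S : Type*} {G : SimpleGraph S} (hG : G.IsTree)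

noncomputable def treePath (x y : S) : G.Walk x y :=
  (hG.existsUnique_path x y).exists.choose

lemma treePath_isPath (x y : S) : (treePath hG x y).IsPath :=
  (hG.existsUnique_path x y).exists.choose_spec

lemma eq_treePath {x y : S} {q : G.Walk x y} (hq : q.IsPath) : q = treePath hG x y :=
  (hG.existsUnique_path x y).unique hq (treePath_isPath hG x y)

lemma treeDist_eq_sum_edges (w : Sym2 S → ℝ) {x y : S} {q : G.Walk x y} (hq : q.IsPath) :
    treeDist G hG w x y = (q.edges.map w).sum := by
  rw [eq_treePath hG hq]
  rfl

lemma treeDist_of_adj (w : Sym2 S → ℝ) {x y : S} (h : G.Adj x y) :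
    treeDist G hG w x y = w s(x, y) := by
  simp [treeDist_eq_sum_edges hG w (Walk.IsPath.of_adj h)]

lemma abs_sub_le_sum_edges (w : Sym2 S → ℝ) {f : S → ℝ}
    (hf : ∀ u v, G.Adj u v → |f u - f v| ≤ w s(u, v)) {x y : S} (q : G.Walk x y) :
    |f x - f y| ≤ (q.edges.map w).sum := by
  induction q with
  | nil => simp
  | @cons x y z h q ih =>
    rw [Walk.edges_cons, List.map_cons, List.sum_cons]
    calc |f x - f z| ≤ |f x - f y| + |f y - f z| := abs_sub_le _ _ _
      _ ≤ w s(x, y) + (q.edges.map w).sum := add_le_add (hf x y h) ih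

variable (r : S)

/-- At the root this is the junk value `parent hG r r = r`. -/
noncomputable def parent (v : S) : S := (treePath hG v r).getVert 1

lemma parent_eq_of_isPath_cons {x y : S} (h : G.Adj x y) {q : G.Walk y r}
    (hq : (Walk.cons h q).IsPath) : parent hG r x = y := by
  rw [parent, ← eq_treePath hG hq, Walk.getVert_cons_succ, Walk.getVert_zero]

lemma treePath_eq_cons_parent {v : S} (hv : v ≠ r) :
    ∃ h : G.Adj v (parent hG r v), treePath hG v r = Walk.cons h (treePath hG (parent hG r v) r) := by
  obtain ⟨y, h, q, hq⟩ := Walk.exists_eq_cons_of_ne hv (treePath hG v r)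
  have hpath : (Walk.cons h q).IsPath := hq ▸ treePath_isPath hG v r
  obtain rfl := parent_eq_of_isPath_cons hG r h hpath
  exact ⟨h, by rw [hq, ← eq_treePath hG hpath.of_cons]⟩

lemma treePath_self : treePath hG r r = Walk.nil :=
  (eq_treePath hG Walk.IsPath.nil).symm

lemma parent_eq_or_parent_eq_of_adj [DecidableEq S] {u v : S} (h : G.Adj u v) :
    (u ≠ r ∧ parent hG r u = v) ∨ (v ≠ r ∧ parent hG r v = u) := by
  by_cases hu : u ∈ (treePath hG v r).support
  · right
    have hv : v ≠ r := by
      rintro rfl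
      simp only [treePath_self, Walk.support_nil, List.mem_cons, List.not_mem_nil, or_false] at hu
      exact h.ne hu
    have htake : (treePath hG v r).takeUntil u hu = Walk.cons h.symm Walk.nil :=
      (hG.existsUnique_path v u).unique ((treePath_isPath hG v r).takeUntil hu)
        (Walk.IsPath.of_adj h.symm)
    have hsplit := Walk.take_spec (treePath hG v r) hu
    rw [htake, Walk.cons_append, Walk.nil_append] at hsplit
    have hpath := hsplit ▸ treePath_isPath hG v r
    exact ⟨hv, parent_eq_of_isPath_cons hG r h.symm hpath⟩
  · left
    have hpath : (Walk.cons h (treePath hG v r)).IsPath :=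
      (Walk.cons_isPath_iff h _).2 ⟨treePath_isPath hG v r, hu⟩
    exact ⟨fun hur => hu (hur ▸ Walk.end_mem_support _), parent_eq_of_isPath_cons hG r h hpath⟩

lemma adj_parent {v : S} (hv : v ≠ r) : G.Adj v (parent hG r v) :=
  (treePath_eq_cons_parent hG r hv).1

theorem parent_induction {P : S → Prop} (root : P r)
    (step : ∀ v, v ≠ r → P (parent hG r v) → P v) (v : S) : P v := by
  induction hn : (treePath hG v r).length generalizing v with
  | zero =>
    obtain rfl := Walk.eq_of_length_eq_zero hn
    exact root
  | succ n ih =>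
    have hv : v ≠ r := by
      rintro rfl
      simp [treePath_self] at hn
    obtain ⟨h, e⟩ := treePath_eq_cons_parent hG r hv
    rw [e, Walk.length_cons] at hn
    exact step v hv (ih _ (by omega))

variable [DecidableEq S]

lemma abs_sub_le_treeDist_of_parent (w : Sym2 S → ℝ) {f : S → ℝ}
    (hf : ∀ v, v ≠ r → |f v - f (parent hG r v)| ≤ w s(v, parent hG r v)) (x y : S) :
    |f x - f y| ≤ treeDist G hG w x y := by
  rw [treeDist_eq_sum_edges hG w (treePath_isPath hG x y)]
  refine abs_sub_le_sum_edges w (fun u v h => ?_) _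
  rcases parent_eq_or_parent_eq_of_adj hG r h with ⟨hu, rfl⟩ | ⟨hv, rfl⟩
  · exact hf u hu
  · rw [abs_sub_comm, Sym2.eq_swap]
    exact hf v hv

noncomputable def pathSum (g : S → ℝ) (p : S) : ℝ :=
  ∑ v ∈ (treePath hG p r).support.toFinset.erase r, g v

lemma pathSum_root (g : S → ℝ) : pathSum hG r g r = 0 := by
  simp [pathSum, treePath_self]

lemma pathSum_of_ne (g : S → ℝ) {v : S} (hv : v ≠ r) :
    pathSum hG r g v = g v + pathSum hG r g (parent hG r v) := by
  obtain ⟨h, e⟩ := treePath_eq_cons_parent hG r hv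
  have hnot : v ∉ (treePath hG (parent hG r v) r).support :=
    ((Walk.cons_isPath_iff _ _).1 (e ▸ treePath_isPath hG v r)).2
  rw [pathSum, e, Walk.support_cons, List.toFinset_cons, erase_insert_of_ne hv,
    sum_insert (by simp [hnot])]
  rfl

lemma sub_root_eq_pathSum (f : S → ℝ) (p : S) :
    f p - f r = pathSum hG r (fun v => f v - f (parent hG r v)) p := by
  induction p using parent_induction hG r with
  | root => simp [pathSum_root]
  | step v hv ih => rw [pathSum_of_ne hG r _ hv, ← ih]; ring

variable [Fintype S]

/-- `v ∈ (treePath hG p r).support` says that `p` lies in the subtree below `v`. -/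
noncomputable def subtreeMass (m : S → ℝ) (v : S) : ℝ :=
  ∑ p ∈ univ.filter (fun p => v ∈ (treePath hG p r).support), m p

lemma sum_mul_eq_sum_sub_parent_mul_subtreeMass {m : S → ℝ} (hm : ∑ p, m p = 0) (f : S → ℝ) :
    ∑ p, m p * f p = ∑ v ∈ univ.erase r, (f v - f (parent hG r v)) * subtreeMass hG r m v := by
  calc ∑ p, m p * f p = ∑ p, m p * (f p - f r) := by simp [mul_sub, ← sum_mul, hm]
    _ = ∑ p, ∑ v ∈ (treePath hG p r).support.toFinset.erase r,
          m p * (f v - f (parent hG r v)) := by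
        simp_rw [sub_root_eq_pathSum hG r f, pathSum, mul_sum]
    _ = ∑ v ∈ univ.erase r, ∑ p ∈ univ.filter (fun p => v ∈ (treePath hG p r).support),
          m p * (f v - f (parent hG r v)) :=
        sum_comm' (by intros; simp [and_comm])
    _ = _ := by
        simp_rw [subtreeMass, mul_sum]
        exact sum_congr rfl fun _ _ => sum_congr rfl fun _ _ => mul_comm _ _

lemma eq_zero_of_subtreeMass_eq_zero {m : S → ℝ} (hm : ∑ p, m p = 0)
    (h : ∀ v, v ≠ r → subtreeMass hG r m v = 0) : m = 0 := by
  funext q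
  calc m q = ∑ p, m p * if p = q then 1 else 0 := by simp
    _ = _ := sum_mul_eq_sum_sub_parent_mul_subtreeMass hG r hm _
    _ = 0 := sum_eq_zero fun v hv => by rw [h v (ne_of_mem_erase hv), mul_zero]

end RootedTree

section FreeNorm

variable {S : Type*} [Fintype S]

lemma finrank_molecules [Nonempty S] :
    Module.finrank ℝ (molecules S) = Fintype.card S - 1 := by
  classical
  let φ : (S → ℝ) →ₗ[ℝ] ℝ := ∑ p, LinearMap.proj p
  have hker : LinearMap.ker φ = molecules S := by
    ext m
    simp [φ, molecules]
  have hrange : LinearMap.range φ = ⊤ := LinearMap.range_eq_top.2 fun c =>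
    ⟨Pi.single (Classical.arbitrary S) c, by simp [φ]⟩
  have := φ.finrank_range_add_finrank_ker
  rw [hrange, finrank_top, Module.finrank_self, Module.finrank_fintype_fun_eq_card, hker] at this
  omega

variable [MetricSpace S]

lemma freeNorm_le {m : S → ℝ} {B : ℝ}
    (h : ∀ f : S → ℝ, LipschitzWith 1 f → ∑ p, m p * f p ≤ B) : freeNorm S m ≤ B :=
  csSup_le ⟨0, 0, LipschitzWith.const' 0, by simp⟩ (by rintro _ ⟨f, hf, rfl⟩; exact h f hf)

lemma le_freeNorm [Nonempty S] {m : S → ℝ} (hm : ∑ p, m p = 0) {f : S → ℝ}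
    (hf : LipschitzWith 1 f) : ∑ p, m p * f p ≤ freeNorm S m := by
  obtain ⟨o⟩ := ‹Nonempty S›
  refine le_csSup ⟨∑ p, |m p| * dist p o, ?_⟩ ⟨f, hf, rfl⟩
  rintro _ ⟨g, hg, rfl⟩
  calc ∑ p, m p * g p = ∑ p, m p * (g p - g o) := by simp [mul_sub, ← sum_mul, hm]
    _ ≤ ∑ p, |m p| * dist p o := sum_le_sum fun p _ => by
      calc m p * (g p - g o) ≤ |m p| * |g p - g o| := (le_abs_self _).trans (abs_mul _ _).le
        _ ≤ |m p| * dist p o := by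
          gcongr
          simpa [Real.dist_eq] using hg.dist_le_mul p o

end FreeNorm

section TreeMetric

variable {S : Type*} [Fintype S] [DecidableEq S] {G : SimpleGraph S} (hG : G.IsTree) (r : S)

/-- An edge `{v, parent v}` is indexed by its lower endpoint `v ≠ r`. -/
noncomputable def edgeCoords (w : Sym2 S → ℝ) : (S → ℝ) →ₗ[ℝ] (univ.erase r → ℝ) where
  toFun m v := w s(v, parent hG r v) * subtreeMass hG r m v
  map_add' m m' := by
    ext v
    simp [subtreeMass, sum_add_distrib, mul_add]
  map_smul' c m := by
    ext v
    simp only [subtreeMass, Pi.smul_apply, smul_eq_mul, ← mul_sum, RingHom.id_apply]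
    ring

lemma edgeCoords_apply (w : Sym2 S → ℝ) (m : S → ℝ) (v : univ.erase r) :
    edgeCoords hG r w m v = w s(v, parent hG r v) * subtreeMass hG r m v := rfl

lemma injective_edgeCoords_domRestrict {w : Sym2 S → ℝ} (hw : ∀ e ∈ G.edgeSet, 0 < w e) :
    Function.Injective ((edgeCoords hG r w).domRestrict (molecules S)) := by
  refine (injective_iff_map_eq_zero _).2 fun m hm => Subtype.ext ?_
  refine eq_zero_of_subtreeMass_eq_zero hG r m.2 fun v hv => ?_
  have hv' := congrFun hm ⟨v, mem_erase.2 ⟨hv, mem_univ v⟩⟩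
  rw [LinearMap.domRestrict_apply, edgeCoords_apply] at hv'
  exact (mul_eq_zero.1 hv').resolve_left (hw _ (adj_parent hG r hv)).ne'

variable [MetricSpace S] {w : Sym2 S → ℝ}

lemma freeNorm_le_sum_abs_edgeCoords (hle : ∀ x y : S, dist x y ≤ treeDist G hG w x y)
    {m : S → ℝ} (hm : ∑ p, m p = 0) :
    freeNorm S m ≤ ∑ v, |edgeCoords hG r w m v| := by
  refine freeNorm_le fun f hf => ?_
  rw [sum_mul_eq_sum_sub_parent_mul_subtreeMass hG r hm, ← sum_coe_sort]
  refine sum_le_sum fun v _ => ?_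
  have hv := ne_of_mem_erase v.2
  have hfv : |f v - f (parent hG r v)| ≤ w s(v, parent hG r v) := by
    calc |f v - f (parent hG r v)| ≤ dist (v : S) (parent hG r v) := by
          simpa [Real.dist_eq] using hf.dist_le_mul v (parent hG r v)
      _ ≤ treeDist G hG w v (parent hG r v) := hle _ _
      _ = w s(v, parent hG r v) := treeDist_of_adj hG w (adj_parent hG r hv)
  calc (f v - f (parent hG r v)) * subtreeMass hG r m v
      ≤ |f v - f (parent hG r v)| * |subtreeMass hG r m v| :=
        (le_abs_self _).trans (abs_mul _ _).le
    _ ≤ |w s(v, parent hG r v)| * |subtreeMass hG r m v| :=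
        mul_le_mul_of_nonneg_right (hfv.trans (le_abs_self _)) (abs_nonneg _)
    _ = |edgeCoords hG r w m v| := by rw [edgeCoords_apply, abs_mul]

lemma sum_abs_edgeCoords_le_freeNorm (hw : ∀ e ∈ G.edgeSet, 0 < w e) {C : ℝ} (hC : 0 < C)
    (hge : ∀ x y : S, treeDist G hG w x y ≤ C * dist x y) {m : S → ℝ} (hm : ∑ p, m p = 0) :
    ∑ v, |edgeCoords hG r w m v| ≤ C * freeNorm S m := by
  have : Nonempty S := ⟨r⟩
  -- the norming function `pathSum hG r g` climbs by `± w` along each edge, with the sign of the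
  -- mass below it
  set g : S → ℝ := fun v => w s(v, parent hG r v) * SignType.sign (subtreeMass hG r m v)
  have hstep : ∀ v, v ≠ r → pathSum hG r g v - pathSum hG r g (parent hG r v) = g v := by
    intro v hv
    rw [pathSum_of_ne hG r g hv]
    ring
  have hlip : ∀ x y, |pathSum hG r g x - pathSum hG r g y| ≤ treeDist G hG w x y := by
    refine abs_sub_le_treeDist_of_parent hG r w fun v hv => ?_
    rw [hstep v hv, abs_mul, abs_of_pos (hw _ (adj_parent hG r hv))]
    exact mul_le_of_le_one_right (hw _ (adj_parent hG r hv)).le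
      (by rcases lt_trichotomy (subtreeMass hG r m v) 0 with h | h | h <;> simp [h])
  have hf : LipschitzWith 1 fun p => pathSum hG r g p / C := by
    refine LipschitzWith.of_dist_le_mul fun x y => ?_
    rw [Real.dist_eq, ← sub_div, abs_div, abs_of_pos hC, div_le_iff₀ hC]
    simpa [mul_comm] using (hlip x y).trans (hge x y)
  calc ∑ v, |edgeCoords hG r w m v| = ∑ p, m p * pathSum hG r g p := by
        rw [sum_mul_eq_sum_sub_parent_mul_subtreeMass hG r hm, ← sum_coe_sort (univ.erase r)]
        refine sum_congr rfl fun v _ => ?_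
        rw [hstep v (ne_of_mem_erase v.2), edgeCoords_apply, abs_mul,
          abs_of_pos (hw _ (adj_parent hG r (ne_of_mem_erase v.2))), mul_assoc, sign_mul_self]
    _ = C * ∑ p, m p * (pathSum hG r g p / C) := by
        rw [mul_sum]
        exact sum_congr rfl fun p _ => by field_simp
    _ ≤ C * freeNorm S m := mul_le_mul_of_nonneg_left (le_freeNorm hm hf) hC.le

end TreeMetric

theorem exists_linearEquiv_l1_of_treeDist_equiv {S : Type*} [Fintype S] [DecidableEq S]
    [MetricSpace S] {G : SimpleGraph S} (hG : G.IsTree) {w : Sym2 S → ℝ}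
    (hw : ∀ e ∈ G.edgeSet, 0 < w e) {C : ℝ} (hC : 0 < C)
    (hle : ∀ x y : S, dist x y ≤ treeDist G hG w x y)
    (hge : ∀ x y : S, treeDist G hG w x y ≤ C * dist x y) :
    ∃ T : molecules S ≃ₗ[ℝ] (Fin (Fintype.card S - 1) → ℝ), ∀ m : molecules S,
      l1norm (T m) ≤ freeNorm S m ∧ freeNorm S m ≤ C * l1norm (T m) := by
  obtain ⟨r⟩ := hG.connected.nonempty
  have : Nonempty S := ⟨r⟩
  have hcard : Fintype.card (univ.erase r) = Fintype.card S - 1 := by simp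
  let E := ((edgeCoords hG r w).domRestrict (molecules S)).linearEquivOfInjective
    (injective_edgeCoords_domRestrict hG r hw)
    (by rw [finrank_molecules, Module.finrank_fintype_fun_eq_card, hcard])
  let T := (E.trans (LinearEquiv.funCongrLeft ℝ ℝ (Fintype.equivFinOfCardEq hcard).symm)).trans
    (LinearEquiv.smulOfNeZero ℝ _ C⁻¹ (inv_ne_zero hC.ne'))
  have hT : ∀ m : molecules S, C * l1norm (T m) = ∑ v, |edgeCoords hG r w m v| := by
    intro m
    simp only [T, E, l1norm, LinearEquiv.trans_apply, LinearMap.linearEquivOfInjective_apply,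
      LinearMap.domRestrict_apply, LinearEquiv.funCongrLeft_apply, LinearMap.funLeft_apply,
      LinearEquiv.smulOfNeZero_apply, Pi.smul_apply, smul_eq_mul, abs_mul, abs_inv,
      abs_of_pos hC, ← mul_sum, mul_inv_cancel_left₀ hC.ne']
    exact Equiv.sum_comp _ (fun v => |edgeCoords hG r w m v|)
  refine ⟨T, fun m => ⟨le_of_mul_le_mul_left ?_ hC, ?_⟩⟩
  · rw [hT]
    exact sum_abs_edgeCoords_le_freeNorm hG r hw hC hge m.2
  · rw [hT]
    exact freeNorm_le_sum_abs_edgeCoords hG r hle m.2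

theorem stmt1_general
    (gupta : ∀ (V : Type) [Fintype V] [DecidableEq V] (G : SimpleGraph V) (hG : G.IsTree)
      (w : Sym2 V → ℝ), (∀ e ∈ G.edgeSet, 0 < w e) → ∀ S : Finset V,
      ∃ (G' : SimpleGraph S) (hG' : G'.IsTree) (w' : Sym2 S → ℝ),
        (∀ e ∈ G'.edgeSet, 0 < w' e) ∧
        ∀ x y : S, treeDist G hG w (x : V) (y : V) ≤ treeDist G' hG' w' x y ∧
          treeDist G' hG' w' x y ≤ 8 * treeDist G hG w (x : V) (y : V))
    {V : Type} [Fintype V] [DecidableEq V] (G : SimpleGraph V) (hG : G.IsTree)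
    (w : Sym2 V → ℝ) (hw : ∀ e ∈ G.edgeSet, 0 < w e)
    (M : Finset V) [MetricSpace M]
    (hdist : ∀ x y : M, dist x y = treeDist G hG w (x : V) (y : V)) :
    ∃ T : molecules M ≃ₗ[ℝ] (Fin (M.card - 1) → ℝ),
      ∀ m : molecules M, l1norm (T m) ≤ freeNorm M m ∧ freeNorm M m ≤ 8 * l1norm (T m) := by
  obtain ⟨G', hG', w', hw', hcmp⟩ := gupta V G hG w hw M
  rw [← Fintype.card_coe M]
  exact exists_linearEquiv_l1_of_treeDist_equiv hG' hw' (by norm_num)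
    (fun x y => hdist x y ▸ (hcmp x y).1) (fun x y => hdist x y ▸ (hcmp x y).2)

/-- assuming Gupta's theorem (every subset of a finite positively weighted
tree carries a tree metric `8`-equivalent to the induced one), for every finite subset `M`
of a weighted tree, with the induced metric, the Banach–Mazur distance between `F(M)`
and `ℓ₁^{|M|-1}` is at most `8`. -/
theorem stmt1
    (gupta : ∀ (V : Type) [Fintype V] [DecidableEq V] (G : SimpleGraph V) (hG : G.IsTree)
      (w : Sym2 V → ℝ), (∀ e ∈ G.edgeSet, 0 < w e) → ∀ S : Finset V,
      ∃ (G' : SimpleGraph S) (hG' : G'.IsTree) (w' : Sym2 S → ℝ),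
        (∀ e ∈ G'.edgeSet, 0 < w' e) ∧
        ∀ x y : S, treeDist G hG w (x : V) (y : V) ≤ treeDist G' hG' w' x y ∧
          treeDist G' hG' w' x y ≤ 8 * treeDist G hG w (x : V) (y : V))
    {V : Type} [Fintype V] [DecidableEq V] (G : SimpleGraph V) (hG : G.IsTree)
    (w : Sym2 V → ℝ) (hw : ∀ e ∈ G.edgeSet, 0 < w e)
    (M : Finset V) (hne : M.Nonempty) [MetricSpace M]
    (hdist : ∀ x y : M, dist x y = treeDist G hG w (x : V) (y : V)) :
    ∃ T : molecules M ≃ₗ[ℝ] (Fin (M.card - 1) → ℝ),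
      ∀ m : molecules M, l1norm (T m) ≤ freeNorm M m ∧ freeNorm M m ≤ 8 * l1norm (T m) :=
  stmt1_general gupta G hG w hw M hdist
end

section
/- Let (M,d) be a finite metric space, {y₁,…,y_k} distinct points with M \ {yᵢ} nonempty, and for each i let xᵢ ∈ M \ {y₁,…,y_k} minimize d(xᵢ,yᵢ). Set fᵢ(x) = d(yᵢ,xᵢ)·1_{yᵢ}(x). Then for all real α₁,…,α_k: max_i |αᵢ| ≤ Lip(Σ αᵢ fᵢ) ≤ max{ max_{i≠j} (d(xᵢ,yᵢ)+d(xⱼ,yⱼ))/d(yᵢ,yⱼ), 1 } · max_i |αᵢ|. -/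
open Finset

/-- The Lipschitz constant of a function on a metric space, as the least `K ≥ 0` with
`|f u - f v| ≤ K d(u,v)` for all `u, v`. -/
noncomputable def lipNorm (M : Type*) [MetricSpace M] (f : M → ℝ) : ℝ :=
  sInf {K : ℝ | 0 ≤ K ∧ ∀ u v : M, |f u - f v| ≤ K * dist u v}

/-- two-sided estimate for the Lipschitz constant of linear combinations of
the point functions `fᵢ = d(yᵢ,xᵢ)·1_{yᵢ}`. -/
theorem stmt3 {M : Type*} [Fintype M] [MetricSpace M] [DecidableEq M] {k : ℕ} (hk : 0 < k)
    (y : Fin k → M) (hy : Function.Injective y)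
    (hne : (Set.range y)ᶜ.Nonempty)
    (x : Fin k → M) (hx : ∀ i, x i ∈ (Set.range y)ᶜ)
    (hmin : ∀ i, ∀ z ∈ (Set.range y)ᶜ, dist (x i) (y i) ≤ dist z (y i))
    (α : Fin k → ℝ) :
    (⨆ i, |α i|) ≤
        lipNorm M (fun p => ∑ i, α i * (dist (y i) (x i) * if p = y i then 1 else 0)) ∧
      lipNorm M (fun p => ∑ i, α i * (dist (y i) (x i) * if p = y i then 1 else 0)) ≤
        max (⨆ (i) (j) (_ : i ≠ j),
            (dist (x i) (y i) + dist (x j) (y j)) / dist (y i) (y j)) 1 * (⨆ i, |α i|) := by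
  classical
  haveI : Nonempty (Fin k) := ⟨⟨0, hk⟩⟩
  set f : M → ℝ := fun p => ∑ i, α i * (dist (y i) (x i) * if p = y i then 1 else 0) with hfdef
  set A : ℝ := ⨆ i, |α i| with hAdef
  set B : ℝ := ⨆ (i) (j) (_ : i ≠ j),
      (dist (x i) (y i) + dist (x j) (y j)) / dist (y i) (y j) with hBdef
  have hAub : ∀ i, |α i| ≤ A := fun i => le_ciSup (f := fun i => |α i|) (Set.finite_range _).bddAbove i
  have hA0 : 0 ≤ A := le_trans (abs_nonneg _) (hAub ⟨0, hk⟩)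
  have hC0 : (0:ℝ) ≤ max B 1 * A :=
    mul_nonneg (le_trans zero_le_one (le_max_right _ _)) hA0
  have hfy : ∀ i, f (y i) = α i * dist (y i) (x i) := by
    intro i
    simp only [hfdef]
    rw [Finset.sum_eq_single i]
    · simp
    · intro j _ hj
      have : y i ≠ y j := fun h => hj (hy h).symm
      simp [this]
    · simp
  have hf0 : ∀ p, p ∉ Set.range y → f p = 0 := by
    intro p hp
    apply Finset.sum_eq_zero
    intro j _
    have : p ≠ y j := fun h => hp ⟨j, h.symm⟩
    simp [this]
  have hxne : ∀ i, x i ∉ Set.range y := fun i => hx i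
  have hdpos : ∀ i, 0 < dist (y i) (x i) := by
    intro i
    rw [dist_pos]
    intro h
    exact hxne i ⟨i, h⟩
  -- membership of the upper bound in the defining set
  have hKey : ∀ u v : M, |f u - f v| ≤ (max B 1 * A) * dist u v := by
    intro u v
    by_cases hu : u ∈ Set.range y
    · obtain ⟨i, rfl⟩ := hu
      by_cases hv : v ∈ Set.range y
      · obtain ⟨j, rfl⟩ := hv
        by_cases hij : i = j
        · subst hij
          simp [hC0]
        · have hd : 0 < dist (y i) (y j) := dist_pos.2 (fun h => hij (hy h))
          rw [hfy i, hfy j]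
          have h1 : |α i * dist (y i) (x i) - α j * dist (y j) (x j)| ≤
              A * (dist (x i) (y i) + dist (x j) (y j)) := by
            calc |α i * dist (y i) (x i) - α j * dist (y j) (x j)|
                ≤ |α i * dist (y i) (x i)| + |α j * dist (y j) (x j)| := abs_sub _ _
              _ = |α i| * dist (y i) (x i) + |α j| * dist (y j) (x j) := by
                  rw [abs_mul, abs_mul, abs_of_nonneg dist_nonneg, abs_of_nonneg dist_nonneg]
              _ ≤ A * dist (y i) (x i) + A * dist (y j) (x j) := by
                  gcongr <;> exact hAub _
              _ = A * (dist (x i) (y i) + dist (x j) (y j)) := by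
                  rw [dist_comm (x i), dist_comm (x j)]; ring
          have h2 : (dist (x i) (y i) + dist (x j) (y j)) / dist (y i) (y j) ≤ B := by
            calc (dist (x i) (y i) + dist (x j) (y j)) / dist (y i) (y j)
                = ⨆ (_ : i ≠ j),
                    (dist (x i) (y i) + dist (x j) (y j)) / dist (y i) (y j) :=
                  (ciSup_pos (f := fun _ =>
                    (dist (x i) (y i) + dist (x j) (y j)) / dist (y i) (y j)) hij).symm
              _ ≤ ⨆ (j') (_ : i ≠ j'),
                    (dist (x i) (y i) + dist (x j') (y j')) / dist (y i) (y j') :=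
                  le_ciSup (f := fun j' => ⨆ (_ : i ≠ j'),
                    (dist (x i) (y i) + dist (x j') (y j')) / dist (y i) (y j'))
                  (Set.finite_range _).bddAbove j
              _ ≤ B := le_ciSup (f := fun i => ⨆ (j) (_ : i ≠ j),
                    (dist (x i) (y i) + dist (x j) (y j)) / dist (y i) (y j))
                  (Set.finite_range _).bddAbove i
          have h3 : dist (x i) (y i) + dist (x j) (y j) ≤ max B 1 * dist (y i) (y j) := by
            rw [div_le_iff₀ hd] at h2
            calc dist (x i) (y i) + dist (x j) (y j) ≤ B * dist (y i) (y j) := h2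
              _ ≤ max B 1 * dist (y i) (y j) := by gcongr; exact le_max_left _ _
          calc |α i * dist (y i) (x i) - α j * dist (y j) (x j)|
              ≤ A * (dist (x i) (y i) + dist (x j) (y j)) := h1
            _ ≤ A * (max B 1 * dist (y i) (y j)) := by gcongr
            _ = max B 1 * A * dist (y i) (y j) := by ring
      · rw [hf0 v hv, hfy i, sub_zero, abs_mul, abs_of_nonneg dist_nonneg]
        have h4 : dist (y i) (x i) ≤ dist (y i) v := by
          rw [dist_comm (y i) (x i), dist_comm (y i) v]
          exact hmin i v hv
        calc |α i| * dist (y i) (x i) ≤ A * dist (y i) v := by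
              apply mul_le_mul (hAub i) h4 dist_nonneg hA0
          _ ≤ max B 1 * A * dist (y i) v := by
              nlinarith [le_max_right B 1, dist_nonneg (x := y i) (y := v), hA0,
                mul_nonneg hA0 (dist_nonneg (x := y i) (y := v))]
    · by_cases hv : v ∈ Set.range y
      · obtain ⟨j, rfl⟩ := hv
        rw [hf0 u hu, hfy j, zero_sub, abs_neg, abs_mul, abs_of_nonneg dist_nonneg]
        have h4 : dist (y j) (x j) ≤ dist u (y j) := by
          rw [dist_comm (y j) (x j)]
          exact hmin j u hu
        calc |α j| * dist (y j) (x j) ≤ A * dist u (y j) := by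
              apply mul_le_mul (hAub j) h4 dist_nonneg hA0
          _ ≤ max B 1 * A * dist u (y j) := by
              nlinarith [le_max_right B 1, dist_nonneg (x := u) (y := y j), hA0,
                mul_nonneg hA0 (dist_nonneg (x := u) (y := y j))]
      · rw [hf0 u hu, hf0 v hv, sub_self, abs_zero]
        exact mul_nonneg hC0 dist_nonneg
  have hmem : (max B 1 * A) ∈ {K : ℝ | 0 ≤ K ∧ ∀ u v : M, |f u - f v| ≤ K * dist u v} :=
    ⟨hC0, hKey⟩
  constructor
  · apply le_csInf ⟨_, hmem⟩
    rintro K ⟨hK0, hK⟩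
    apply ciSup_le
    intro i
    have h := hK (y i) (x i)
    rw [hfy i, hf0 (x i) (hxne i), sub_zero, abs_mul, abs_of_nonneg dist_nonneg] at h
    have := hdpos i
    nlinarith [h, this]
  · exact csInf_le ⟨0, fun K hK => hK.1⟩ hmem
end
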